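/- arXiv:1208.5600 — 4 statements merged into one kernel-verified Lean document; each statement's English description precedes it below -/
import Mathlib

section
/- Let f, g be bounded real functions with g > 0, let θ^(1),…,θ^(M) be sample points, and let φ be a clipping transformation with 0 < φ(g(θ)) ≤ g(θ) agreeing with g on all but M_T of the sample points. Define normalized transformed weights w̄^(i) = φ(g(θ^(i)))/∑_j φ(g(θ^(j))) and bridge weights w̌^(i) = φ(g(θ^(i)))/∑_j g(θ^(j)). Then |∑_i f(θ^(i)) w̄^(i) − ∑_i f(θ^(i)) w̌^(i)| ≤ 2 ‖f‖∞ ‖g‖∞² M_T / (M · ((1/M)∑_j φ(g(θ^(j))))²). -/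
/-- Lemma 1, deterministic part: with normalized transformed weights
`w̄ i = φ(g(θ i)) / ∑ⱼ φ(g(θ j))` and bridge weights `w̌ i = φ(g(θ i)) / ∑ⱼ g(θ j)`,
the corresponding estimates of `∫ f` differ by at most
`2 ‖f‖∞ ‖g‖∞² M_T / (M · ((1/M) ∑ⱼ φ(g(θ j)))²)`. -/
theorem stmt1 {S : Type*} (M MT : ℕ) (hM : 0 < M) (θ : Fin M → S)
    (f g : S → ℝ) (F B : ℝ)
    (hF : ∀ s, |f s| ≤ F) (hB : ∀ s, |g s| ≤ B) (hgpos : ∀ s, 0 < g s)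
    (φ : ℝ → ℝ) (hφ : ∀ x : ℝ, 0 < x → 0 < φ x ∧ φ x ≤ x)
    (T : Finset (Fin M)) (hT : T.card ≤ MT)
    (hid : ∀ i : Fin M, i ∉ T → φ (g (θ i)) = g (θ i)) :
    |(∑ i : Fin M, f (θ i) * (φ (g (θ i)) / ∑ j : Fin M, φ (g (θ j)))) -
      (∑ i : Fin M, f (θ i) * (φ (g (θ i)) / ∑ j : Fin M, g (θ j)))|
      ≤ 2 * F * B ^ 2 * MT /
        ((M : ℝ) * ((1 / (M : ℝ)) * ∑ j : Fin M, φ (g (θ j))) ^ 2) := by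
  have hφpos : ∀ i : Fin M, 0 < φ (g (θ i)) := fun i => (hφ _ (hgpos _)).1
  have hφle : ∀ i : Fin M, φ (g (θ i)) ≤ g (θ i) := fun i => (hφ _ (hgpos _)).2
  have hgB : ∀ i : Fin M, g (θ i) ≤ B := fun i => (le_abs_self _).trans (hB _)
  have hF0 : 0 ≤ F := (abs_nonneg _).trans (hF (θ ⟨0, hM⟩))
  have hB0 : 0 < B := lt_of_lt_of_le (hgpos (θ ⟨0, hM⟩)) (hgB ⟨0, hM⟩)
  have hMpos : (0:ℝ) < M := by exact_mod_cast hM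
  set Sφ := ∑ j : Fin M, φ (g (θ j)) with hSφdef
  set Sg := ∑ j : Fin M, g (θ j) with hSgdef
  have hSφpos : 0 < Sφ :=
    Finset.sum_pos (fun i _ => hφpos i) ⟨⟨0, hM⟩, Finset.mem_univ _⟩
  have hSle : Sφ ≤ Sg := Finset.sum_le_sum fun i _ => hφle i
  have hSgpos : 0 < Sg := hSφpos.trans_le hSle
  have hSgB : Sg ≤ M * B := by
    calc Sg ≤ ∑ _j : Fin M, B := Finset.sum_le_sum fun i _ => hgB i
    _ = M * B := by simp [Finset.sum_const, nsmul_eq_mul]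
  set A := ∑ i : Fin M, f (θ i) * φ (g (θ i)) with hAdef
  have hAle : |A| ≤ F * Sφ := by
    calc |A| ≤ ∑ i : Fin M, |f (θ i) * φ (g (θ i))| := Finset.abs_sum_le_sum_abs _ _
    _ ≤ ∑ i : Fin M, F * φ (g (θ i)) := Finset.sum_le_sum fun i _ => by
        rw [abs_mul, abs_of_pos (hφpos i)]
        exact mul_le_mul_of_nonneg_right (hF _) (hφpos i).le
    _ = F * Sφ := by rw [Finset.mul_sum]
  have hdiff : Sg - Sφ ≤ MT * B := by
    have h1 : Sg - Sφ = ∑ i ∈ T, (g (θ i) - φ (g (θ i))) := by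
      rw [hSgdef, hSφdef, ← Finset.sum_sub_distrib]
      refine (Finset.sum_subset (Finset.subset_univ T) ?_).symm
      intro i _ hi
      rw [hid i hi]; ring
    rw [h1]
    calc ∑ i ∈ T, (g (θ i) - φ (g (θ i))) ≤ ∑ _i ∈ T, B :=
        Finset.sum_le_sum fun i _ => by linarith [hφpos i, hgB i]
    _ = T.card * B := by simp [Finset.sum_const, nsmul_eq_mul]
    _ ≤ MT * B := mul_le_mul_of_nonneg_right (by exact_mod_cast hT) hB0.le
  have hdiff0 : 0 ≤ Sg - Sφ := by linarith
  have hrewrite : (∑ i : Fin M, f (θ i) * (φ (g (θ i)) / Sφ)) -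
      (∑ i : Fin M, f (θ i) * (φ (g (θ i)) / Sg)) = A / Sφ - A / Sg := by
    simp only [← mul_div_assoc, hAdef, Finset.sum_div]
  rw [hrewrite]
  have habs : |A / Sφ - A / Sg| = |A| * (Sg - Sφ) / (Sφ * Sg) := by
    have h2 : A / Sφ - A / Sg = A * (Sg - Sφ) / (Sφ * Sg) := by
      field_simp
    rw [h2, abs_div, abs_mul, abs_of_nonneg hdiff0,
      abs_of_pos (mul_pos hSφpos hSgpos)]
  rw [habs]
  have hRHS : (M : ℝ) * ((1 / (M : ℝ)) * Sφ) ^ 2 = Sφ ^ 2 / M := by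
    field_simp
  rw [hRHS]
  rw [div_le_div_iff₀ (mul_pos hSφpos hSgpos) (by positivity)]
  have hA0 : 0 ≤ |A| := abs_nonneg _
  have hMT0 : (0:ℝ) ≤ MT := Nat.cast_nonneg _
  have key : |A| * (Sg - Sφ) ≤ (F * Sφ) * (MT * B) :=
    mul_le_mul hAle hdiff hdiff0 (by positivity)
  have hSφB : Sφ ≤ M * B := hSle.trans hSgB
  have h1 : Sφ ^ 2 / M ≤ B * Sφ := by
    rw [div_le_iff₀ hMpos]
    nlinarith [hSφB, hSφpos]
  have hc : 0 ≤ F * ↑MT * B ^ 2 := by positivity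
  calc |A| * (Sg - Sφ) * (Sφ ^ 2 / ↑M)
      ≤ (F * Sφ * (↑MT * B)) * (B * Sφ) :=
        mul_le_mul key h1 (by positivity) (by positivity)
    _ ≤ 2 * F * B ^ 2 * ↑MT * (Sφ * Sg) := by
        nlinarith [mul_le_mul_of_nonneg_left
          (mul_le_mul_of_nonneg_right hSle hSφpos.le) hc]
end

section
/- With the same setup, define standard normalized weights w^(i) = g(θ^(i))/∑_j g(θ^(j)) and bridge weights w̌^(i) = φ(g(θ^(i)))/∑_j g(θ^(j)). Then |∑_i f(θ^(i)) w̌^(i) − ∑_i f(θ^(i)) w^(i)| ≤ 2 ‖f‖∞ ‖g‖∞ M_T / (M · (1/M)∑_j g(θ^(j))). -/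
/-- Lemma 2, deterministic part: with standard normalized weights
`w i = g(θ i) / ∑ⱼ g(θ j)` and bridge weights `w̌ i = φ(g(θ i)) / ∑ⱼ g(θ j)`,
the corresponding estimates of `∫ f` differ by at most
`2 ‖f‖∞ ‖g‖∞ M_T / (M · (1/M) ∑ⱼ g(θ j))`. -/
theorem stmt2 {S : Type*} (M MT : ℕ) (hM : 0 < M) (θ : Fin M → S)
    (f g : S → ℝ) (F B : ℝ)
    (hF : ∀ s, |f s| ≤ F) (hB : ∀ s, |g s| ≤ B) (hgpos : ∀ s, 0 < g s)
    (φ : ℝ → ℝ) (hφ : ∀ x : ℝ, 0 < x → 0 < φ x ∧ φ x ≤ x)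
    (T : Finset (Fin M)) (hT : T.card ≤ MT)
    (hid : ∀ i : Fin M, i ∉ T → φ (g (θ i)) = g (θ i)) :
    |(∑ i : Fin M, f (θ i) * (φ (g (θ i)) / ∑ j : Fin M, g (θ j))) -
      (∑ i : Fin M, f (θ i) * (g (θ i) / ∑ j : Fin M, g (θ j)))|
      ≤ 2 * F * B * MT / ((M : ℝ) * ((1 / (M : ℝ)) * ∑ j : Fin M, g (θ j))) := by
  set G : ℝ := ∑ j : Fin M, g (θ j) with hG
  have hGpos : 0 < G := by
    apply Finset.sum_pos (fun i _ => hgpos (θ i))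
    exact Finset.univ_nonempty_iff.mpr ⟨⟨0,hM⟩⟩
  have hMne : (M : ℝ) ≠ 0 := by positivity
  have hrhs : (M : ℝ) * ((1 / (M : ℝ)) * G) = G := by field_simp
  rw [hrhs]
  have hdiff : (∑ i : Fin M, f (θ i) * (φ (g (θ i)) / G)) -
      (∑ i : Fin M, f (θ i) * (g (θ i) / G))
      = (∑ i : Fin M, f (θ i) * (φ (g (θ i)) - g (θ i))) / G := by
    rw [← Finset.sum_sub_distrib, Finset.sum_div]
    congr 1; ext i; field_simp
  rw [hdiff, abs_div, abs_of_pos hGpos]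
  gcongr
  -- bound numerator
  have hF0 : 0 ≤ F := le_trans (abs_nonneg _) (hF (θ ⟨0, hM⟩))
  have hB0 : 0 ≤ B := le_trans (abs_nonneg _) (hB (θ ⟨0, hM⟩))
  have hzero : ∀ i ∈ (Finset.univ : Finset (Fin M)), i ∉ T →
      f (θ i) * (φ (g (θ i)) - g (θ i)) = 0 := by
    intro i _ hi; rw [hid i hi]; ring
  have hsub : (∑ i : Fin M, f (θ i) * (φ (g (θ i)) - g (θ i)))
      = ∑ i ∈ T, f (θ i) * (φ (g (θ i)) - g (θ i)) := by
    rw [← Finset.sum_subset (Finset.subset_univ T) hzero]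
  rw [hsub]
  calc |∑ i ∈ T, f (θ i) * (φ (g (θ i)) - g (θ i))|
      ≤ ∑ i ∈ T, |f (θ i) * (φ (g (θ i)) - g (θ i))| := Finset.abs_sum_le_sum_abs _ _
    _ ≤ ∑ i ∈ T, F * B := by
        apply Finset.sum_le_sum
        intro i _
        rw [abs_mul]
        apply mul_le_mul (hF _) ?_ (abs_nonneg _) hF0
        have hg := hgpos (θ i)
        have hφi := hφ _ hg
        rw [abs_of_nonpos (by linarith [hφi.2])]
        have : |g (θ i)| = g (θ i) := abs_of_pos hg
        linarith [hB (θ i), hφi.1]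
    _ = T.card * (F * B) := by rw [Finset.sum_const, nsmul_eq_mul]
    _ ≤ MT * (F * B) := by
        apply mul_le_mul_of_nonneg_right _ (by positivity)
        exact_mod_cast hT
    _ ≤ 2 * F * B * MT := by nlinarith [mul_nonneg (mul_nonneg hF0 hB0) (Nat.cast_nonneg (α := ℝ) MT)]
end

section
/- If M_T of the M weights exceed the threshold T (i.e., w*_i ≥ T exactly for i = 1,…,M_T in decreasing order), then after hard clipping and normalization, the effective sample size of the clipped weights satisfies M_eff ≥ M_T, where M_eff = 1/∑_i (w̄_i)². -/
/-- if exactly the `M_T` largest of the decreasingly sorted positive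
weights are `≥ T`, then after hard clipping at `T` and normalization, the effective
sample size satisfies `M_eff ≥ M_T`. -/
theorem stmt11 (M MT : ℕ) (hM : 0 < M) (hMT : MT ≤ M)
    (w : Fin M → ℝ) (hpos : ∀ i, 0 < w i)
    (hsorted : ∀ i j : Fin M, i ≤ j → w j ≤ w i)
    (T : ℝ) (hT : 0 < T)
    (hthr : ∀ i : Fin M, T ≤ w i ↔ (i : ℕ) < MT)
    (wbar : Fin M → ℝ)
    (hwbar : ∀ i, wbar i = min (w i) T / ∑ j : Fin M, min (w j) T) :
    (MT : ℝ) ≤ 1 / ∑ i : Fin M, (wbar i) ^ 2 := by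
  set S : ℝ := ∑ j : Fin M, min (w j) T with hSdef
  have hS : 0 < S := by
    apply Finset.sum_pos
    · intro i _; exact lt_min (hpos i) hT
    · exact Finset.univ_nonempty_iff.mpr ⟨⟨0, hM⟩⟩
  have hwpos : ∀ i, 0 < wbar i := fun i => by
    rw [hwbar i]; exact div_pos (lt_min (hpos i) hT) hS
  have hsum1 : ∑ i : Fin M, wbar i = 1 := by
    simp only [hwbar]
    rw [← Finset.sum_div, div_self (ne_of_gt hS)]
  have hQpos : 0 < ∑ i : Fin M, (wbar i) ^ 2 := by
    apply Finset.sum_pos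
    · intro i _; exact pow_pos (hwpos i) 2
    · exact Finset.univ_nonempty_iff.mpr ⟨⟨0, hM⟩⟩
  rcases Nat.eq_zero_or_pos MT with h0 | hMTpos
  · rw [h0]; push_cast; positivity
  -- bound each wbar by T/S
  have hbound : ∀ i, wbar i ≤ T / S := fun i => by
    rw [hwbar i]
    exact (div_le_div_iff_of_pos_right hS).mpr (min_le_right _ _)
  -- sum of squares ≤ T/S
  have hsq : ∑ i : Fin M, (wbar i) ^ 2 ≤ T / S := by
    calc ∑ i : Fin M, (wbar i) ^ 2 ≤ ∑ i : Fin M, (T / S) * wbar i := by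
          apply Finset.sum_le_sum
          intro i _
          rw [sq]
          exact mul_le_mul_of_nonneg_right (hbound i) (le_of_lt (hwpos i))
      _ = (T / S) * ∑ i : Fin M, wbar i := by rw [Finset.mul_sum]
      _ = T / S := by rw [hsum1, mul_one]
  -- MT * T ≤ S
  have hMTS : (MT : ℝ) * T ≤ S := by
    have hsub : (Finset.univ.map (Fin.castLEEmb hMT)) ⊆ Finset.univ := Finset.subset_univ _
    have h1 : ∑ i ∈ Finset.univ.map (Fin.castLEEmb hMT), min (w i) T = (MT : ℝ) * T := by
      rw [Finset.sum_map]
      have : ∀ j : Fin MT, min (w ((Fin.castLEEmb hMT) j)) T = T := by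
        intro j
        have : T ≤ w ((Fin.castLEEmb hMT) j) := (hthr ((Fin.castLEEmb hMT) j)).mpr (by simpa using j.isLt)
        exact min_eq_right this
      rw [Finset.sum_congr rfl (fun j _ => this j)]
      simp [mul_comm]
    calc (MT : ℝ) * T = ∑ i ∈ Finset.univ.map (Fin.castLEEmb hMT), min (w i) T := h1.symm
      _ ≤ S := Finset.sum_le_sum_of_subset_of_nonneg hsub
          (fun i _ _ => le_of_lt (lt_min (hpos i) hT))
  -- T/S ≤ 1/MT
  have hMTR : (0 : ℝ) < (MT : ℝ) := by exact_mod_cast hMTpos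
  have hTS : T / S ≤ 1 / (MT : ℝ) := by
    rw [div_le_div_iff₀ hS hMTR]
    linarith [hMTS]
  have hQ : ∑ i : Fin M, (wbar i) ^ 2 ≤ 1 / (MT : ℝ) := hsq.trans hTS
  rw [le_div_iff₀ hQpos]
  calc (MT : ℝ) * ∑ i : Fin M, (wbar i) ^ 2 ≤ (MT : ℝ) * (1 / (MT : ℝ)) :=
        mul_le_mul_of_nonneg_left hQ (le_of_lt hMTR)
    _ = 1 := mul_one_div_cancel (ne_of_gt hMTR)
end

section
/- Tempering increases the effective sample size monotonically as γ decreases: for positive weights w*_1,…,w*_M and 0 < γ₁ ≤ γ₂ ≤ 1, the normalized weights obtained from exponents γ₁ majorize-dominate those from γ₂ in the sense that ∑_i (w̄_i^{(γ₁)})² ≤ ∑_i (w̄_i^{(γ₂)})², i.e., M_eff(γ₁) ≥ M_eff(γ₂). -/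
/-!
With `P(γ) = ∑ᵢ wᵢ^γ` the sum of squared normalized weights is `P(2γ)/P(γ)²`, so it suffices
to show `P(2γ₁) P(γ₂)² ≤ P(2γ₂) P(γ₁)²` for `0 ≤ γ₁ ≤ γ₂`. Cauchy–Schwarz, splitting
`wᵢ^γ₂` as the geometric mean of `wᵢ^γ₁` and `wᵢ^(2γ₂-γ₁)`, gives `P(γ₂)² ≤ P(γ₁) P(2γ₂-γ₁)`.
Chebyshev's sum inequality with weights `wᵢ^γ₁`, applied to the similarly ordered sequences
`wᵢ^γ₁` and `wᵢ^(2(γ₂-γ₁))`, gives `P(2γ₁) P(2γ₂-γ₁) ≤ P(γ₁) P(2γ₂)`. Multiplying the two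
finishes the proof.
-/

open Finset Real Set

theorem MonovaryOn.sum_mul_sum_le_sum_mul_sum_mul {ι R : Type*} [CommRing R] [LinearOrder R]
    [IsStrictOrderedRing R] {s : Finset ι} {p f g : ι → R} (hp : ∀ i ∈ s, 0 ≤ p i)
    (hfg : MonovaryOn f g s) :
    (∑ i ∈ s, p i * f i) * ∑ i ∈ s, p i * g i ≤ (∑ i ∈ s, p i) * ∑ i ∈ s, p i * (f i * g i) := by
  have hexpand (i j : ι) : p i * p j * ((f j - f i) * (g j - g i)) =
      p i * (p j * (f j * g j)) + p i * (f i * g i) * p j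
        - p i * f i * (p j * g j) - p i * g i * (p j * f j) := by ring
  have hdouble : ∑ i ∈ s, ∑ j ∈ s, p i * p j * ((f j - f i) * (g j - g i)) =
      2 * ((∑ i ∈ s, p i) * ∑ i ∈ s, p i * (f i * g i) -
        (∑ i ∈ s, p i * f i) * ∑ i ∈ s, p i * g i) := by
    simp only [hexpand, sum_add_distrib, sum_sub_distrib, ← mul_sum, ← sum_mul]
    ring
  have hnonneg : 0 ≤ ∑ i ∈ s, ∑ j ∈ s, p i * p j * ((f j - f i) * (g j - g i)) :=
    sum_nonneg fun i hi => sum_nonneg fun j hj =>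
      mul_nonneg (mul_nonneg (hp i hi) (hp j hj)) (hfg.sub_mul_sub_nonneg hi hj)
  linarith

variable {ι : Type*} {s : Finset ι} {w : ι → ℝ}

lemma monovaryOn_rpow_rpow (hw : ∀ i ∈ s, 0 < w i) {a b : ℝ} (ha : 0 ≤ a) (hb : 0 ≤ b) :
    MonovaryOn (fun i => w i ^ a) (fun i => w i ^ b) s := by
  intro i hi j hj hlt
  have hij : w i ≤ w j := by
    by_contra! h
    exact hlt.not_ge (rpow_le_rpow (hw j hj).le h.le hb)
  exact rpow_le_rpow (hw i hi).le hij ha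

lemma sum_sq_rpow_mul_sq_sum_rpow_le (hw : ∀ i ∈ s, 0 < w i) {γ₁ γ₂ : ℝ} (h0 : 0 ≤ γ₁)
    (h12 : γ₁ ≤ γ₂) :
    (∑ i ∈ s, (w i ^ γ₁) ^ 2) * (∑ i ∈ s, w i ^ γ₂) ^ 2 ≤
      (∑ i ∈ s, (w i ^ γ₂) ^ 2) * (∑ i ∈ s, w i ^ γ₁) ^ 2 := by
  have hpow (γ : ℝ) : ∀ i ∈ s, 0 ≤ w i ^ γ := fun i hi => (rpow_pos_of_pos (hw i hi) γ).le
  set g : ι → ℝ := fun i => w i ^ (2 * (γ₂ - γ₁))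
  have hsplit : ∀ i ∈ s, (w i ^ γ₂) ^ 2 = w i ^ γ₁ * (w i ^ γ₁ * g i) := fun i hi => by
    rw [← rpow_add (hw i hi), ← rpow_add (hw i hi), ← rpow_mul_natCast (hw i hi).le]
    ring_nf
  have hcauchy : (∑ i ∈ s, w i ^ γ₂) ^ 2 ≤ (∑ i ∈ s, w i ^ γ₁) * ∑ i ∈ s, w i ^ γ₁ * g i :=
    sum_sq_le_sum_mul_sum_of_sq_le_mul s (hpow γ₁)
      (fun i hi => mul_nonneg (hpow γ₁ i hi) (hpow _ i hi))
      (fun i hi => by rw [hsplit i hi, ← mul_assoc, ← sq])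
  have hchebyshev := (monovaryOn_rpow_rpow hw h0 (by linarith : 0 ≤ 2 * (γ₂ - γ₁))
    ).sum_mul_sum_le_sum_mul_sum_mul (hpow γ₁)
  simp only [← sq] at hchebyshev
  rw [← sum_congr rfl hsplit] at hchebyshev
  have hS : 0 ≤ ∑ i ∈ s, w i ^ γ₁ := sum_nonneg (hpow γ₁)
  calc (∑ i ∈ s, (w i ^ γ₁) ^ 2) * (∑ i ∈ s, w i ^ γ₂) ^ 2
      ≤ (∑ i ∈ s, (w i ^ γ₁) ^ 2) * ((∑ i ∈ s, w i ^ γ₁) * ∑ i ∈ s, w i ^ γ₁ * g i) := by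
        gcongr
    _ = (∑ i ∈ s, w i ^ γ₁) * ((∑ i ∈ s, (w i ^ γ₁) ^ 2) * ∑ i ∈ s, w i ^ γ₁ * g i) := by ring
    _ ≤ (∑ i ∈ s, w i ^ γ₁) * ((∑ i ∈ s, w i ^ γ₁) * ∑ i ∈ s, (w i ^ γ₂) ^ 2) := by
        gcongr
    _ = _ := by ring

lemma monotoneOn_sum_sq_rpow_div_sum_rpow (hs : s.Nonempty) (hw : ∀ i ∈ s, 0 < w i) :
    MonotoneOn (fun γ : ℝ => ∑ i ∈ s, (w i ^ γ / ∑ j ∈ s, w j ^ γ) ^ 2) (Ici 0) := by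
  intro γ₁ h0 γ₂ _ h12
  have hS (γ : ℝ) : 0 < ∑ j ∈ s, w j ^ γ := sum_pos (fun j hj => rpow_pos_of_pos (hw j hj) γ) hs
  simp only [div_pow, ← sum_div]
  rw [div_le_div_iff₀ (pow_pos (hS γ₁) 2) (pow_pos (hS γ₂) 2)]
  exact sum_sq_rpow_mul_sq_sum_rpow_le hw h0 h12

theorem stmt14_general (M : ℕ) (hM : 0 < M) (w : Fin M → ℝ) (hpos : ∀ i, 0 < w i)
    (γ₁ γ₂ : ℝ) (h1 : 0 < γ₁) (h12 : γ₁ ≤ γ₂) :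
    (∑ i : Fin M, ((w i) ^ γ₁ / ∑ j : Fin M, (w j) ^ γ₁) ^ 2 ≤
      ∑ i : Fin M, ((w i) ^ γ₂ / ∑ j : Fin M, (w j) ^ γ₂) ^ 2) ∧
    (1 / ∑ i : Fin M, ((w i) ^ γ₂ / ∑ j : Fin M, (w j) ^ γ₂) ^ 2 ≤
      1 / ∑ i : Fin M, ((w i) ^ γ₁ / ∑ j : Fin M, (w j) ^ γ₁) ^ 2) := by
  have hne : (univ : Finset (Fin M)).Nonempty := univ_nonempty_iff.mpr ⟨⟨0, hM⟩⟩
  have hle := monotoneOn_sum_sq_rpow_div_sum_rpow hne (fun i _ => hpos i)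
    (mem_Ici.mpr h1.le) (mem_Ici.mpr (h1.le.trans h12)) h12
  have hS : 0 < ∑ j : Fin M, w j ^ γ₁ := sum_pos (fun j _ => rpow_pos_of_pos (hpos j) γ₁) hne
  have hpos₁ : 0 < ∑ i : Fin M, (w i ^ γ₁ / ∑ j : Fin M, w j ^ γ₁) ^ 2 :=
    sum_pos (fun i _ => pow_pos (div_pos (rpow_pos_of_pos (hpos i) γ₁) hS) 2) hne
  exact ⟨hle, one_div_le_one_div_of_le hpos₁ hle⟩

/-- tempering increases the effective sample size monotonically as the
exponent decreases: for `0 < γ₁ ≤ γ₂ ≤ 1`, the normalized tempered weights satisfy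
`∑ᵢ (w̄ᵢ^{(γ₁)})² ≤ ∑ᵢ (w̄ᵢ^{(γ₂)})²`, i.e. `M_eff(γ₁) ≥ M_eff(γ₂)`. -/
theorem stmt14 (M : ℕ) (hM : 0 < M) (w : Fin M → ℝ) (hpos : ∀ i, 0 < w i)
    (γ₁ γ₂ : ℝ) (h1 : 0 < γ₁) (h12 : γ₁ ≤ γ₂) (h2 : γ₂ ≤ 1) :
    (∑ i : Fin M, ((w i) ^ γ₁ / ∑ j : Fin M, (w j) ^ γ₁) ^ 2 ≤
      ∑ i : Fin M, ((w i) ^ γ₂ / ∑ j : Fin M, (w j) ^ γ₂) ^ 2) ∧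
    (1 / ∑ i : Fin M, ((w i) ^ γ₂ / ∑ j : Fin M, (w j) ^ γ₂) ^ 2 ≤
      1 / ∑ i : Fin M, ((w i) ^ γ₁ / ∑ j : Fin M, (w j) ^ γ₁) ^ 2) :=
  stmt14_general M hM w hpos γ₁ γ₂ h1 h12
end
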